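/- If T = (T_n) ∈ A, then ‖d_n T_n d_n^{-1}‖ → 0 as n → ∞. Consequently the spectral radius r(T_n) of T_n tends to 0 as n → ∞. -/

import Mathlib

noncomputable section

/-- The operator norm on `M_n(ℂ)` acting on `ℓ²(Fin n)`. -/
def opNorm {n : ℕ} (x : Matrix (Fin n) (Fin n) ℂ) : ℝ :=
  ‖LinearMap.toContinuousLinearMap (Matrix.toEuclideanLin x)‖

/-- The diagonal matrix `d_n` whose `k`-th diagonal entry is `c_n ^ k` (for `1 ≤ k ≤ n`). -/
def dMat (c : ℕ → ℝ) (n : ℕ) : Matrix (Fin n) (Fin n) ℂ :=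
  Matrix.diagonal fun k => ((c n ^ ((k : ℕ) + 1) : ℝ) : ℂ)

/-- The inverse `d_n⁻¹`. -/
def dMatInv (c : ℕ → ℝ) (n : ℕ) : Matrix (Fin n) (Fin n) ℂ :=
  Matrix.diagonal fun k => (((c n ^ ((k : ℕ) + 1))⁻¹ : ℝ) : ℂ)

/-- The norm `p_n(x) = max {‖x‖, ‖d_n x d_n⁻¹‖}`. -/
def pnorm (c : ℕ → ℝ) (n : ℕ) (x : Matrix (Fin n) (Fin n) ℂ) : ℝ :=
  max (opNorm x) (opNorm (dMat c n * x * dMatInv c n))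

/-- The left shift `L_n`: `L_n e_{k+1} = e_k`, `L_n e_1 = 0`. -/
def Lmat (n : ℕ) : Matrix (Fin n) (Fin n) ℂ :=
  Matrix.of fun i j => if (i : ℕ) + 1 = (j : ℕ) then 1 else 0

/-- The integer interval `E_{n,k} = {i ∈ ℕ : n/k ≤ i ≤ 2n/k}`. -/
def Eset (n k : ℕ) : Finset ℕ :=
  (Finset.range (2 * n + 1)).filter fun i => (n : ℝ) / k ≤ i ∧ (i : ℝ) ≤ 2 * n / k

/-- `u_{n,k} = μ_{n,k}⁻¹ ∑_{i ∈ E_{n,k}} L_n^i` if `k ≤ n`, and `u_{n,k} = I_n` if `n < k`. -/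
def umat (n k : ℕ) : Matrix (Fin n) (Fin n) ℂ :=
  if k ≤ n then ((Eset n k).card : ℂ)⁻¹ • ∑ i ∈ Eset n k, Lmat n ^ i else 1

/-- Membership in the algebra `A`: `p(T) < ∞` and
`sup_n p_n(T_n u_{n,k} − T_n) + sup_n p_n(u_{n,k} T_n − T_n) → 0` as `k → ∞`. -/
def memA (c : ℕ → ℝ) (T : ∀ n, Matrix (Fin n) (Fin n) ℂ) : Prop :=
  (∃ M : ℝ, ∀ n, pnorm c n (T n) ≤ M) ∧
  ∀ ε : ℝ, 0 < ε → ∃ K : ℕ, ∀ k, K ≤ k → ∀ n,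
    pnorm c n (T n * umat n k - T n) + pnorm c n (umat n k * T n - T n) ≤ ε

/-- `p(T) = sup_n p_n(T_n)`. -/
def pA (c : ℕ → ℝ) (T : ∀ n, Matrix (Fin n) (Fin n) ℂ) : ℝ :=
  ⨆ n, pnorm c n (T n)

/-- The upper triangular part `Δ̄_U x`. -/
def upperT {n : ℕ} (x : Matrix (Fin n) (Fin n) ℂ) : Matrix (Fin n) (Fin n) ℂ :=
  Matrix.of fun i j => if i ≤ j then x i j else 0

/-- The strictly lower triangular part `Δ_L x`. -/
def lowerT {n : ℕ} (x : Matrix (Fin n) (Fin n) ℂ) : Matrix (Fin n) (Fin n) ℂ :=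
  Matrix.of fun i j => if j < i then x i j else 0

open scoped Matrix.Norms.L2Operator
open scoped Matrix

lemma opNorm_eq {n : ℕ} (x : Matrix (Fin n) (Fin n) ℂ) : opNorm x = ‖x‖ := rfl

lemma d_mul_dInv (c : ℕ → ℝ) (hone : ∀ n, 1 < c n) (n : ℕ) :
    dMat c n * dMatInv c n = 1 := by
  have hc : c n ≠ 0 := by nlinarith [hone n]
  rw [dMat, dMatInv, Matrix.diagonal_mul_diagonal]
  ext i j
  rcases eq_or_ne i j with rfl | h
  · have hc' : ((c n : ℝ) : ℂ) ≠ 0 := by exact_mod_cast hc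
    simp only [Matrix.diagonal_apply_eq]
    rw [Matrix.one_apply_eq, ← Complex.ofReal_mul, mul_inv_cancel₀ (pow_ne_zero _ hc), Complex.ofReal_one]
  · simp [Matrix.diagonal_apply_ne _ h, Matrix.one_apply_ne h]

lemma dInv_mul_d (c : ℕ → ℝ) (hone : ∀ n, 1 < c n) (n : ℕ) :
    dMatInv c n * dMat c n = 1 := by
  have hc : c n ≠ 0 := by nlinarith [hone n]
  rw [dMat, dMatInv, Matrix.diagonal_mul_diagonal]
  ext i j
  rcases eq_or_ne i j with rfl | h
  · have hc' : ((c n : ℝ) : ℂ) ≠ 0 := by exact_mod_cast hc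
    simp only [Matrix.diagonal_apply_eq]
    rw [Matrix.one_apply_eq, ← Complex.ofReal_mul, inv_mul_cancel₀ (pow_ne_zero _ hc), Complex.ofReal_one]
  · simp [Matrix.diagonal_apply_ne _ h, Matrix.one_apply_ne h]

lemma conj_L (c : ℕ → ℝ) (hone : ∀ n, 1 < c n) (n : ℕ) :
    dMat c n * Lmat n * dMatInv c n = (((c n : ℝ) : ℂ))⁻¹ • Lmat n := by
  have hc : c n ≠ 0 := by nlinarith [hone n]
  have hc' : ((c n : ℝ) : ℂ) ≠ 0 := by exact_mod_cast hc
  ext i j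
  rw [dMat, dMatInv, Matrix.mul_diagonal, Matrix.diagonal_mul, Matrix.smul_apply]
  simp only [Lmat, Matrix.of_apply, smul_eq_mul, mul_ite, mul_zero, mul_one, ite_mul, zero_mul]
  split_ifs with h
  · have hj : (j:ℕ) + 1 = ((i:ℕ) + 1) + 1 := by omega
    rw [hj]
    push_cast
    field_simp
    ring
  · simp

lemma dconj_pow (c : ℕ → ℝ) (hone : ∀ n, 1 < c n) (n i : ℕ) :
    dMat c n * (Lmat n ^ i) * dMatInv c n = ((((c n : ℝ) : ℂ))⁻¹) ^ i • (Lmat n ^ i) := by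
  induction i with
  | zero => simp [d_mul_dInv c hone n]
  | succ i ih =>
    have : dMat c n * Lmat n ^ (i+1) * dMatInv c n
        = (dMat c n * Lmat n ^ i * dMatInv c n) * (dMat c n * Lmat n * dMatInv c n) := by
      rw [pow_succ]
      calc dMat c n * (Lmat n ^ i * Lmat n) * dMatInv c n
          = dMat c n * Lmat n ^ i * ((dMatInv c n * dMat c n) * Lmat n) * dMatInv c n := by
            rw [dInv_mul_d c hone n]; simp [mul_assoc]
        _ = (dMat c n * Lmat n ^ i * dMatInv c n) * (dMat c n * Lmat n * dMatInv c n) := by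
            simp [mul_assoc]
    rw [this, ih, conj_L c hone n, smul_mul_smul_comm, ← pow_succ, ← pow_succ]

lemma Lmat_mulVec_castSucc {m : ℕ} (v : Fin (m+1) → ℂ) (a : Fin m) :
    (Lmat (m+1) *ᵥ v) a.castSucc = v a.succ := by
  have key : ∀ j : Fin (m+1),
      (((a.castSucc : ℕ) + 1 = (j : ℕ)) = (a.succ = j)) := by
    intro j
    simp [Fin.ext_iff]
  simp only [Matrix.mulVec, dotProduct, Lmat, Matrix.of_apply, key,
    ite_mul, one_mul, zero_mul]
  rw [Finset.sum_ite_eq]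
  simp

lemma Lmat_mulVec_last {m : ℕ} (v : Fin (m+1) → ℂ) :
    (Lmat (m+1) *ᵥ v) (Fin.last m) = 0 := by
  simp only [Matrix.mulVec, dotProduct, Lmat, Matrix.of_apply]
  apply Finset.sum_eq_zero
  intro j _
  have := j.isLt
  have hj : ¬ (m + 1 = (j : ℕ)) := by omega
  simp [Fin.val_last, hj]

lemma norm_L_le (n : ℕ) : ‖Lmat n‖ ≤ 1 := by
  rw [Matrix.l2_opNorm_def]
  apply ContinuousLinearMap.opNorm_le_bound _ zero_le_one
  intro x
  rw [one_mul]
  show ‖Matrix.toEuclideanLin (Lmat n) x‖ ≤ ‖x‖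
  rw [Matrix.toEuclideanLin_apply]
  rw [EuclideanSpace.norm_eq, EuclideanSpace.norm_eq]
  apply Real.sqrt_le_sqrt
  match n with
  | 0 => simp
  | (m+1) =>
    set w : Fin (m+1) → ℂ := (WithLp.equiv 2 (Fin (m+1) → ℂ)) x with hw
    have hxw : ∀ i, x i = w i := fun _ => rfl
    have lhs : ∀ i : Fin (m+1),
        ‖((WithLp.equiv 2 (Fin (m+1) → ℂ)).symm (Lmat (m+1) *ᵥ w)) i‖
          = ‖(Lmat (m+1) *ᵥ w) i‖ := fun _ => rfl
    simp only [lhs, hxw]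
    rw [Fin.sum_univ_castSucc, Fin.sum_univ_succ (f := fun i => ‖w i‖^2)]
    rw [Lmat_mulVec_last]
    simp only [norm_zero]
    have : ∀ a : Fin m, ‖(Lmat (m+1) *ᵥ w) a.castSucc‖^2 = ‖w a.succ‖^2 := by
      intro a; rw [Lmat_mulVec_castSucc]
    rw [show x.ofLp = w from rfl, Finset.sum_congr rfl (fun a _ => this a)]
    nlinarith [norm_nonneg (w 0), sq_nonneg ‖w 0‖]

lemma Eset_one_le {n k : ℕ} (hk : 1 ≤ k) (hkn : k ≤ n) {i : ℕ} (hi : i ∈ Eset n k) :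
    1 ≤ i := by
  rw [Eset, Finset.mem_filter] at hi
  have h1 : (n : ℝ) / k ≤ i := hi.2.1
  have hk' : (0:ℝ) < k := by positivity
  have hnk : (1:ℝ) ≤ (n:ℝ) / k := by
    rw [le_div_iff₀ hk']
    simpa using (by exact_mod_cast hkn : (k:ℝ) ≤ n)
  have : (1:ℝ) ≤ (i:ℝ) := hnk.trans h1
  exact_mod_cast this

lemma Eset_nonempty {n k : ℕ} (hk : 1 ≤ k) (hkn : k ≤ n) : (Eset n k).Nonempty := by
  refine ⟨⌈(n:ℝ)/k⌉₊, ?_⟩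
  have hk' : (0:ℝ) < k := by positivity
  have hn1 : 1 ≤ n := hk.trans hkn
  have hnk : (1:ℝ) ≤ (n:ℝ) / k := by
    rw [le_div_iff₀ hk']
    simpa using (by exact_mod_cast hkn : (k:ℝ) ≤ n)
  have hpos : (0:ℝ) ≤ (n:ℝ)/k := by positivity
  have hceil : ((⌈(n:ℝ)/k⌉₊ : ℝ)) < (n:ℝ)/k + 1 := Nat.ceil_lt_add_one hpos
  have hle2 : ((⌈(n:ℝ)/k⌉₊ : ℝ)) ≤ 2 * n / k := by
    have : (n:ℝ)/k + 1 ≤ 2 * n / k := by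
      have : 2 * (n:ℝ) / k = (n:ℝ)/k + (n:ℝ)/k := by ring
      rw [this]
      linarith
    linarith
  rw [Eset, Finset.mem_filter, Finset.mem_range]
  refine ⟨?_, Nat.le_ceil _, hle2⟩
  have hn2 : ((⌈(n:ℝ)/k⌉₊ : ℝ)) ≤ 2 * n := by
    have hdf : 2 * (n:ℝ) / k ≤ 2 * n := by
      apply div_le_self (by positivity)
      exact_mod_cast hk
    linarith
  have : (⌈(n:ℝ)/k⌉₊ : ℕ) ≤ 2 * n := by exact_mod_cast hn2
  omega

lemma norm_dud_le (c : ℕ → ℝ) (hone : ∀ n, 1 < c n) {n k : ℕ}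
    (hk : 1 ≤ k) (hkn : k ≤ n) :
    ‖dMat c n * umat n k * dMatInv c n‖ ≤ (c n)⁻¹ := by
  have hc1 : 1 < c n := hone n
  have hc0 : 0 < c n := by linarith
  rw [umat, if_pos hkn]
  have hμ : 0 < (Eset n k).card := Finset.card_pos.2 (Eset_nonempty hk hkn)
  rw [Matrix.mul_smul, Matrix.smul_mul, Finset.mul_sum, Finset.sum_mul]
  have hterm : ∀ i ∈ Eset n k,
      ‖dMat c n * Lmat n ^ i * dMatInv c n‖ ≤ (c n)⁻¹ := by
    intro i hi
    have hi1 : 1 ≤ i := Eset_one_le hk hkn hi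
    rw [dconj_pow c hone n i, norm_smul]
    have h1 : ‖(((c n : ℝ) : ℂ))⁻¹ ^ i‖ ≤ (c n)⁻¹ := by
      rw [norm_pow, norm_inv, Complex.norm_real, Real.norm_eq_abs,
        abs_of_pos hc0]
      calc ((c n)⁻¹) ^ i ≤ ((c n)⁻¹) ^ 1 := by
            apply pow_le_pow_of_le_one (by positivity) ?_ hi1
            rw [inv_le_one_iff₀]; right; linarith
        _ = (c n)⁻¹ := pow_one _
    have h2 : ‖Lmat n ^ i‖ ≤ 1 := by
      calc ‖Lmat n ^ i‖ ≤ ‖Lmat n‖ ^ i := norm_pow_le' _ hi1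
        _ ≤ 1 ^ i := pow_le_pow_left₀ (norm_nonneg _) (norm_L_le n) i
        _ = 1 := one_pow i
    calc ‖(((c n : ℝ) : ℂ))⁻¹ ^ i‖ * ‖Lmat n ^ i‖ ≤ (c n)⁻¹ * 1 := by
          apply mul_le_mul h1 h2 (norm_nonneg _) (by positivity)
      _ = (c n)⁻¹ := mul_one _
  calc ‖(((Eset n k).card : ℂ))⁻¹ • ∑ i ∈ Eset n k, dMat c n * Lmat n ^ i * dMatInv c n‖
      = ‖(((Eset n k).card : ℂ))⁻¹‖ * ‖∑ i ∈ Eset n k, dMat c n * Lmat n ^ i * dMatInv c n‖ :=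
        norm_smul _ _
    _ ≤ (((Eset n k).card : ℝ))⁻¹ * (((Eset n k).card : ℝ) * (c n)⁻¹) := by
        apply mul_le_mul_of_nonneg
        · rw [norm_inv]
          simp
        · calc ‖∑ i ∈ Eset n k, dMat c n * Lmat n ^ i * dMatInv c n‖
              ≤ ∑ i ∈ Eset n k, ‖dMat c n * Lmat n ^ i * dMatInv c n‖ := norm_sum_le _ _
            _ ≤ ∑ _i ∈ Eset n k, (c n)⁻¹ := Finset.sum_le_sum hterm
            _ = ((Eset n k).card : ℝ) * (c n)⁻¹ := by
                rw [Finset.sum_const, nsmul_eq_mul]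
        · positivity
        · positivity
    _ = (c n)⁻¹ := by
        rw [← mul_assoc, inv_mul_cancel₀ (by positivity : ((Eset n k).card:ℝ) ≠ 0), one_mul]

lemma pnorm_nonneg (c : ℕ → ℝ) (n : ℕ) (x : Matrix (Fin n) (Fin n) ℂ) :
    0 ≤ pnorm c n x :=
  le_trans (by rw [opNorm_eq]; exact norm_nonneg _) (le_max_left _ _)

lemma opNorm_conj_le_pnorm (c : ℕ → ℝ) (n : ℕ) (x : Matrix (Fin n) (Fin n) ℂ) :
    opNorm (dMat c n * x * dMatInv c n) ≤ pnorm c n x := le_max_right _ _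

lemma main_est (c : ℕ → ℝ) (hone : ∀ n, 1 < c n) (T : ∀ n, Matrix (Fin n) (Fin n) ℂ)
    {M : ℝ} (hM : ∀ n, pnorm c n (T n) ≤ M) {k n : ℕ} (hk : 1 ≤ k) (hkn : k ≤ n) :
    opNorm (dMat c n * T n * dMatInv c n)
      ≤ pnorm c n (T n * umat n k - T n) + M * (c n)⁻¹ := by
  have hc0 : 0 < c n := lt_trans one_pos (hone n)
  set a := dMat c n * T n * dMatInv c n with ha
  set b := dMat c n * (T n * umat n k) * dMatInv c n with hb
  have hab : a - b = -(dMat c n * (T n * umat n k - T n) * dMatInv c n) := by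
    rw [ha, hb]
    simp [Matrix.mul_sub, Matrix.sub_mul]
  have h1 : ‖a - b‖ ≤ pnorm c n (T n * umat n k - T n) := by
    rw [hab, norm_neg, ← opNorm_eq]
    exact opNorm_conj_le_pnorm c n _
  have hbs : b = (dMat c n * T n * dMatInv c n) * (dMat c n * umat n k * dMatInv c n) := by
    rw [hb]
    calc dMat c n * (T n * umat n k) * dMatInv c n
        = dMat c n * T n * ((dMatInv c n * dMat c n) * umat n k) * dMatInv c n := by
          rw [dInv_mul_d c hone n]; simp [mul_assoc]
      _ = (dMat c n * T n * dMatInv c n) * (dMat c n * umat n k * dMatInv c n) := by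
          simp [mul_assoc]
  have h2 : ‖b‖ ≤ M * (c n)⁻¹ := by
    rw [hbs]
    calc ‖(dMat c n * T n * dMatInv c n) * (dMat c n * umat n k * dMatInv c n)‖
        ≤ ‖dMat c n * T n * dMatInv c n‖ * ‖dMat c n * umat n k * dMatInv c n‖ :=
          norm_mul_le _ _
      _ ≤ M * (c n)⁻¹ := by
          apply mul_le_mul ?_ (norm_dud_le c hone hk hkn) (norm_nonneg _) ?_
          · rw [← opNorm_eq]
            exact le_trans (opNorm_conj_le_pnorm c n _) (hM n)
          · exact le_trans (le_trans (pnorm_nonneg c n (T n)) (hM n)) le_rfl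
  calc opNorm a = ‖(a - b) + b‖ := by rw [opNorm_eq, sub_add_cancel]
    _ ≤ ‖a - b‖ + ‖b‖ := norm_add_le _ _
    _ ≤ pnorm c n (T n * umat n k - T n) + M * (c n)⁻¹ := add_le_add h1 h2

lemma part1 (c : ℕ → ℝ) (hmono : StrictMono c) (hone : ∀ n, 1 < c n)
    (hunbdd : ∀ M : ℝ, ∃ n, M < c n)
    (T : ∀ n, Matrix (Fin n) (Fin n) ℂ) (hT : memA c T) :
    Filter.Tendsto (fun n => opNorm (dMat c n * T n * dMatInv c n)) Filter.atTop (nhds 0) := by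
  have h0 : ∀ n, 0 ≤ opNorm (dMat c n * T n * dMatInv c n) := fun n => by
    rw [opNorm_eq]; exact norm_nonneg _
  rw [Metric.tendsto_atTop]
  intro ε hε
  obtain ⟨M, hM⟩ := hT.1
  obtain ⟨K, hK⟩ := hT.2 (ε/2) (by linarith)
  have hM0 : 0 ≤ M := le_trans (pnorm_nonneg c 0 (T 0)) (hM 0)
  obtain ⟨n₁, hn₁⟩ := hunbdd (2*M/ε)
  refine ⟨max (K+1) n₁, fun n hn => ?_⟩
  have hkn : K + 1 ≤ n := le_trans (le_max_left _ _) hn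
  have hcn : 2*M/ε < c n := by
    rcases eq_or_lt_of_le (le_trans (le_max_right (K+1) n₁) hn) with h | h
    · rw [← h]; exact hn₁
    · exact lt_trans hn₁ (hmono h)
  have hc0 : 0 < c n := lt_trans one_pos (hone n)
  have est := main_est c hone T hM (k := K+1) (n := n) (Nat.le_add_left 1 K) hkn
  have happ : pnorm c n (T n * umat n (K+1) - T n) ≤ ε/2 := by
    have h1 := hK (K+1) (Nat.le_succ K) n
    have h2 := pnorm_nonneg c n (umat n (K+1) * T n - T n)
    linarith
  have hMc : M * (c n)⁻¹ < ε/2 := by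
    have h3 : 2*M < c n * ε := (div_lt_iff₀ hε).mp hcn
    rw [mul_inv_lt_iff₀ hc0]
    nlinarith
  rw [Real.dist_eq, sub_zero, abs_of_nonneg (h0 n)]
  linarith

lemma eig_le (c : ℕ → ℝ) (hone : ∀ n, 1 < c n) (n : ℕ) (x : Matrix (Fin n) (Fin n) ℂ)
    (μ : ℂ) (h : Module.End.HasEigenvalue (Matrix.toLin' x) μ) :
    ‖μ‖ ≤ opNorm (dMat c n * x * dMatInv c n) := by
  obtain ⟨v, hv⟩ := h.exists_hasEigenvector
  have hv0 : v ≠ 0 := hv.2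
  have hmv : x *ᵥ v = μ • v := by
    have h1 := hv.apply_eq_smul
    rwa [Matrix.toLin'_apply] at h1
  set w : Fin n → ℂ := dMat c n *ᵥ v with hwdef
  have hw0 : w ≠ 0 := by
    intro hw
    apply hv0
    have h2 : dMatInv c n *ᵥ w = v := by
      rw [hwdef, Matrix.mulVec_mulVec, dInv_mul_d c hone n, Matrix.one_mulVec]
    rw [hw, Matrix.mulVec_zero] at h2
    exact h2.symm
  have hAw : (dMat c n * x * dMatInv c n) *ᵥ w = μ • w := by
    rw [hwdef, Matrix.mulVec_mulVec]
    have h3 : dMat c n * x * dMatInv c n * dMat c n = dMat c n * x := by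
      rw [mul_assoc (dMat c n * x), dInv_mul_d c hone n, mul_one]
    rw [h3, ← Matrix.mulVec_mulVec, hmv, Matrix.mulVec_smul]
  have hnorm := Matrix.l2_opNorm_mulVec (dMat c n * x * dMatInv c n)
    ((WithLp.equiv 2 (Fin n → ℂ)).symm w)
  have hAx : (EuclideanSpace.equiv (Fin n) ℂ).symm
      ((dMat c n * x * dMatInv c n) *ᵥ ((WithLp.equiv 2 (Fin n → ℂ)).symm w))
      = μ • ((WithLp.equiv 2 (Fin n → ℂ)).symm w) := by
    exact congrArg _ hAw
  rw [hAx, norm_smul] at hnorm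
  have hxpos : 0 < ‖(WithLp.equiv 2 (Fin n → ℂ)).symm w‖ := by
    rw [norm_pos_iff]
    exact fun hzero => hw0 (congrArg (WithLp.equiv 2 (Fin n → ℂ)) hzero)
  rw [opNorm_eq]
  exact le_of_mul_le_mul_right hnorm hxpos

/-- If `T = (T_n) ∈ A`, then `‖d_n T_n d_n⁻¹‖ → 0` as `n → ∞`.
Consequently the spectral radius `r(T_n)` (the maximum modulus of an eigenvalue of `T_n`)
tends to `0` as `n → ∞`. -/
theorem stmt8 (c : ℕ → ℝ) (hmono : StrictMono c) (hone : ∀ n, 1 < c n)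
    (hunbdd : ∀ M : ℝ, ∃ n, M < c n)
    (T : ∀ n, Matrix (Fin n) (Fin n) ℂ) (hT : memA c T) :
    Filter.Tendsto (fun n => opNorm (dMat c n * T n * dMatInv c n)) Filter.atTop (nhds 0) ∧
    ∀ ε : ℝ, 0 < ε → ∃ N : ℕ, ∀ n, N ≤ n → ∀ μ : ℂ,
      Module.End.HasEigenvalue (Matrix.toLin' (T n)) μ → ‖μ‖ < ε := by
  have hp1 := part1 c hmono hone hunbdd T hT
  refine ⟨hp1, fun ε hε => ?_⟩
  rw [Metric.tendsto_atTop] at hp1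
  obtain ⟨N, hN⟩ := hp1 ε hε
  refine ⟨N, fun n hn μ hμ => ?_⟩
  have h1 := hN n hn
  rw [Real.dist_eq, sub_zero] at h1
  have h2 : opNorm (dMat c n * T n * dMatInv c n) < ε := lt_of_abs_lt h1
  exact lt_of_le_of_lt (eig_le c hone n (T n) μ hμ) h2

end
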